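/- arXiv:1811.04865 — 3 statements merged into one kernel-verified Lean document; each statement's English description precedes it below -/
import Mathlib

section
/- Let I be an interval and f, g : I → ℝ be C² strictly monotone functions with nowhere vanishing first derivatives, and let k : I → ℝ be a C² function with k′ nowhere vanishing satisfying k″/k′ = min(f″/f′, g″/g′) pointwise. Then A^[k] ≤ A^[f] and A^[k] ≤ A^[g] pointwise, and for every continuous strictly monotone s : I → ℝ with A^[s] ≤ A^[f] and A^[s] ≤ A^[g] pointwise, one has A^[s] ≤ A^[k] pointwise. -/
open Filter Set

/-- `m` is the value of the quasi-arithmetic mean `A^[f]` on the tuple `v` from `I`,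
i.e. `m ∈ I` and `f m = (f v₁ + ⋯ + f vₙ)/n`. -/
def IsQAM (I : Set ℝ) (f : ℝ → ℝ) {n : ℕ} (v : Fin n → ℝ) (m : ℝ) : Prop :=
  m ∈ I ∧ f m = (∑ i, f (v i)) / n

/-- `A^[f] ≤ A^[g]` pointwise on all (nonempty) finite tuples from `I` (the relation `f ≺ g`). -/
def QALE (I : Set ℝ) (f g : ℝ → ℝ) : Prop :=
  ∀ (n : ℕ), 0 < n → ∀ (v : Fin n → ℝ), (∀ i, v i ∈ I) →
    ∀ a b : ℝ, IsQAM I f v a → IsQAM I g v b → a ≤ b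

/-- `A^[f] = A^[g]` on all (nonempty) finite tuples from `I`. -/
def QAEQ (I : Set ℝ) (f g : ℝ → ℝ) : Prop :=
  ∀ (n : ℕ), 0 < n → ∀ (v : Fin n → ℝ), (∀ i, v i ∈ I) →
    ∀ a b : ℝ, IsQAM I f v a → IsQAM I g v b → a = b

open Topology

lemma ev_pos_right {φ : ℝ → ℝ} {z c : ℝ} (h : HasDerivAt φ c z) (hc : 0 < c) (h0 : φ z = 0) :
    ∀ᶠ w in 𝓝[>] z, 0 < φ w := by
  have hs := hasDerivAt_iff_tendsto_slope.mp h
  have h1 : ∀ᶠ w in 𝓝[≠] z, 0 < slope φ z w := hs.eventually (eventually_gt_nhds hc)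
  have h2 : 𝓝[>] z ≤ 𝓝[≠] z := nhdsWithin_mono _ (fun w hw => ne_of_gt hw)
  filter_upwards [h2 h1, self_mem_nhdsWithin] with w hw hw2
  have hwz : (0:ℝ) < w - z := sub_pos.mpr hw2
  have hsl : slope φ z w = φ w / (w - z) := by
    rw [slope_def_field, h0, sub_zero]
  rw [hsl] at hw
  have := mul_pos hw hwz
  rwa [div_mul_cancel₀ _ (ne_of_gt hwz)] at this

lemma deriv2_nonpos_of_isLocalMax {ρ : ℝ → ℝ} {z : ℝ}
    (hd : ∀ᶠ w in 𝓝 z, DifferentiableAt ℝ ρ w)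
    (hd2 : DifferentiableAt ℝ (deriv ρ) z)
    (hmax : IsLocalMax ρ z) : deriv (deriv ρ) z ≤ 0 := by
  by_contra hcon
  push_neg at hcon
  have h1 : deriv ρ z = 0 := hmax.deriv_eq_zero
  have h2 : ∀ᶠ w in 𝓝[>] z, 0 < deriv ρ w := ev_pos_right hd2.hasDerivAt hcon h1
  have h3 : ∀ᶠ w in 𝓝[>] z, DifferentiableAt ℝ ρ w := nhdsWithin_le_nhds hd
  have h4 : ∀ᶠ w in 𝓝[>] z, ρ w ≤ ρ z := nhdsWithin_le_nhds hmax
  obtain ⟨u, hu, hsub⟩ := mem_nhdsGT_iff_exists_Ioc_subset.mp ((h2.and h3).and h4)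
  have huz : z < u := hu
  have hcont : ContinuousOn ρ (Icc z u) := by
    intro w hw
    rcases eq_or_lt_of_le hw.1 with rfl | hlt
    · exact (hd.self_of_nhds).continuousAt.continuousWithinAt
    · exact ((hsub ⟨hlt, hw.2⟩).1.2).continuousAt.continuousWithinAt
  have hmono : StrictMonoOn ρ (Icc z u) := by
    apply strictMonoOn_of_deriv_pos (convex_Icc _ _) hcont
    intro w hw
    rw [interior_Icc] at hw
    exact (hsub ⟨hw.1, le_of_lt hw.2⟩).1.1
  have : ρ z < ρ u := hmono (left_mem_Icc.mpr (le_of_lt huz)) (right_mem_Icc.mpr (le_of_lt huz)) huz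
  exact absurd ((hsub ⟨huz, le_refl u⟩).2) (not_le.mpr this)

lemma deriv_pos_interior {k : ℝ → ℝ} {I : Set ℝ} (hmono : StrictMonoOn k I) {z : ℝ}
    (hz : z ∈ I) (hzi : I ∈ 𝓝 z) (hd : DifferentiableAt ℝ k z) (h0 : deriv k z ≠ 0) :
    0 < deriv k z := by
  rcases h0.lt_or_gt with hneg | hpos
  · exfalso
    have h : HasDerivAt (fun w => k z - k w) (-(deriv k z)) z := by
      simpa using (hd.hasDerivAt.const_sub (k z))
    have hev : ∀ᶠ w in 𝓝[>] z, 0 < k z - k w := ev_pos_right h (by linarith) (by simp)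
    have hmem : ∀ᶠ w in 𝓝[>] z, w ∈ I := nhdsWithin_le_nhds hzi
    obtain ⟨w, hw1, hw2, hw3⟩ := (hev.and (hmem.and self_mem_nhdsWithin)).exists
    have : k z < k w := hmono hz hw2 hw3
    linarith
  · exact hpos

/-- `F` is convex with respect to `K` on `I` (three-point chord condition). -/
def CvxWrt (I : Set ℝ) (F K : ℝ → ℝ) : Prop :=
  ∀ x ∈ I, ∀ z ∈ I, ∀ y ∈ I, x < z → z < y →
    (F z - F x) * (K y - K x) ≤ (F y - F x) * (K z - K x)

lemma cvxWrt_self (I : Set ℝ) (K : ℝ → ℝ) : CvxWrt I K K := by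
  intro x _ z _ y _ _ _
  rw [mul_comm]

/-- Supporting line from above for `s` viewed as a concave function of `f`. -/
lemma supporting_slope {I : Set ℝ} {f s : ℝ → ℝ} (hfm : StrictMonoOn f I)
    (hconc : CvxWrt I f s) {x y z₀ : ℝ} (hx : x ∈ I) (hy : y ∈ I) (hz : z₀ ∈ I)
    (h1 : x < z₀) (h2 : z₀ < y) (hIc : Icc x y ⊆ I) :
    ∃ lam : ℝ, ∀ t ∈ Icc x y, s t - s z₀ ≤ lam * (f t - f z₀) := by
  set σ : ℝ → ℝ := fun t => (s t - s z₀) / (f t - f z₀) with hσ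
  have key : ∀ t ∈ Icc x y, ∀ t' ∈ Icc x y, t' < z₀ → z₀ < t → σ t ≤ σ t' := by
    intro t ht t' ht' hlt hgt
    have htI : t ∈ I := hIc ht
    have ht'I : t' ∈ I := hIc ht'
    have hA : 0 < f z₀ - f t' := sub_pos.mpr (hfm ht'I hz hlt)
    have hB : 0 < f t - f z₀ := sub_pos.mpr (hfm hz htI hgt)
    have hyp := hconc t' ht'I z₀ hz t htI hlt hgt
    show (s t - s z₀) / (f t - f z₀) ≤ (s t' - s z₀) / (f t' - f z₀)
    have e : (s t' - s z₀) / (f t' - f z₀) = (s z₀ - s t') / (f z₀ - f t') := by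
      rw [← neg_div_neg_eq]; ring_nf
    rw [e, div_le_div_iff₀ hB hA]
    nlinarith [hyp]
  have hyIcc : y ∈ Icc x y := right_mem_Icc.mpr (le_of_lt (h1.trans h2))
  have hxIcc : x ∈ Icc x y := left_mem_Icc.mpr (le_of_lt (h1.trans h2))
  set S : Set ℝ := σ '' (Ioc z₀ y) with hS
  have hne : S.Nonempty := ⟨σ y, ⟨y, ⟨h2, le_refl y⟩, rfl⟩⟩
  have hbdd : BddAbove S := by
    refine ⟨σ x, ?_⟩
    rintro _ ⟨t, ht, rfl⟩
    exact key t ⟨le_of_lt (h1.trans ht.1), ht.2⟩ x hxIcc h1 ht.1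
  refine ⟨sSup S, fun t ht => ?_⟩
  rcases lt_trichotomy t z₀ with hlt | rfl | hgt
  · have hle : sSup S ≤ σ t := by
      apply csSup_le hne
      rintro _ ⟨t', ht', rfl⟩
      exact key t' ⟨le_of_lt (h1.trans ht'.1), ht'.2⟩ t ht hlt ht'.1
    have hneg : f t - f z₀ < 0 := sub_neg.mpr (hfm (hIc ht) hz hlt)
    have := (le_div_iff_of_neg hneg).mp hle
    linarith [this]
  · simp
  · have hge : σ t ≤ sSup S := le_csSup hbdd ⟨t, ⟨hgt, ht.2⟩, rfl⟩
    have hposd : 0 < f t - f z₀ := sub_pos.mpr (hfm hz (hIc ht) hgt)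
    calc s t - s z₀ = σ t * (f t - f z₀) := by
          rw [hσ]; field_simp
      _ ≤ sSup S * (f t - f z₀) := mul_le_mul_of_nonneg_right hge hposd.le

lemma step {I : Set ℝ} {k s f : ℝ → ℝ} {x y z₀ A B ε : ℝ}
    (hIc : Icc x y ⊆ I)
    (hkd : ∀ w ∈ I, DifferentiableAt ℝ k w) (hkd2 : ∀ w ∈ I, DifferentiableAt ℝ (deriv k) w)
    (hk0 : ∀ w ∈ I, deriv k w ≠ 0) (hkm : StrictMonoOn k I)
    (hfd : ∀ w ∈ I, DifferentiableAt ℝ f w) (hfd2 : ∀ w ∈ I, DifferentiableAt ℝ (deriv f) w)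
    (hf0 : ∀ w ∈ I, deriv f w ≠ 0) (hfm : StrictMonoOn f I)
    (hconc : CvxWrt I f s)
    (hz₀ : z₀ ∈ Ioo x y) (hB : 0 < B) (hε : 0 < ε)
    (hpos : 0 < A + 2*ε*(k z₀))
    (hmax : ∀ t ∈ Icc x y, A*(k t) + ε*(k t)^2 - B*(s t) ≤ A*(k z₀) + ε*(k z₀)^2 - B*(s z₀)) :
    deriv (deriv k) z₀ / deriv k z₀ < deriv (deriv f) z₀ / deriv f z₀ := by
  obtain ⟨hxz, hzy⟩ := hz₀
  have hz₀I : z₀ ∈ I := hIc ⟨hxz.le, hzy.le⟩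
  have hxI : x ∈ I := hIc (left_mem_Icc.mpr (hxz.trans hzy).le)
  have hyI : y ∈ I := hIc (right_mem_Icc.mpr (hxz.trans hzy).le)
  have hIcc_nhds : Icc x y ∈ 𝓝 z₀ := Icc_mem_nhds hxz hzy
  have hI_nhds : I ∈ 𝓝 z₀ := mem_of_superset hIcc_nhds hIc
  obtain ⟨lam, hlam⟩ := supporting_slope hfm hconc hxI hyI hz₀I hxz hzy hIc
  set ρ : ℝ → ℝ := fun t => A*(k t) + ε*(k t)^2 - B*lam*(f t) with hρ
  set ψ : ℝ → ℝ := fun t => A*(deriv k t) + ε*(2*(k t)*(deriv k t)) - B*lam*(deriv f t) with hψ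
  -- local max of ρ at z₀
  have hlocmax : IsLocalMax ρ z₀ := by
    filter_upwards [hIcc_nhds] with t ht
    have h1 := hmax t ht
    have h2 := hlam t ht
    have h3 : B*(s t - s z₀) ≤ B*(lam*(f t - f z₀)) := mul_le_mul_of_nonneg_left h2 hB.le
    show A*(k t) + ε*(k t)^2 - B*lam*(f t) ≤ A*(k z₀) + ε*(k z₀)^2 - B*lam*(f z₀)
    nlinarith [h1, h3]
  -- first derivative of ρ on I
  have hρd : ∀ t ∈ I, HasDerivAt ρ (ψ t) t := by
    intro t ht
    have h1 : HasDerivAt (fun u => A * k u) (A * deriv k t) t :=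
      ((hkd t ht).hasDerivAt).const_mul A
    have h2 : HasDerivAt (fun u => ε * (k u)^2) (ε * (2 * (k t) * (deriv k t))) t := by
      have := ((hkd t ht).hasDerivAt).pow 2
      have h' := this.const_mul ε
      exact h'.congr_deriv (by ring)
    have h3 : HasDerivAt (fun u => B*lam*(f u)) (B*lam*(deriv f t)) t :=
      ((hfd t ht).hasDerivAt).const_mul (B*lam)
    exact (h1.add h2).sub h3
  have hevd : deriv ρ =ᶠ[𝓝 z₀] ψ := by
    filter_upwards [hI_nhds] with t ht
    exact (hρd t ht).deriv
  -- ψ differentiable at z₀ with explicit second derivative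
  have hψd : HasDerivAt ψ
      (A*(deriv (deriv k) z₀)
        + ε*(2*((deriv k z₀)*(deriv k z₀) + (k z₀)*(deriv (deriv k) z₀)))
        - B*lam*(deriv (deriv f) z₀)) z₀ := by
    have h1 : HasDerivAt (fun u => A * deriv k u) (A * deriv (deriv k) z₀) z₀ :=
      ((hkd2 z₀ hz₀I).hasDerivAt).const_mul A
    have h2 : HasDerivAt (fun u => ε*(2*(k u)*(deriv k u)))
        (ε*(2*((deriv k z₀)*(deriv k z₀) + (k z₀)*(deriv (deriv k) z₀)))) z₀ := by
      have hm : HasDerivAt (fun u => (k u)*(deriv k u))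
          ((deriv k z₀)*(deriv k z₀) + (k z₀)*(deriv (deriv k) z₀)) z₀ :=
        ((hkd z₀ hz₀I).hasDerivAt).mul ((hkd2 z₀ hz₀I).hasDerivAt)
      have h2' := (hm.const_mul 2).const_mul ε
      have e : (fun u => ε*(2*(k u)*(deriv k u))) = (fun u => ε*(2*((k u)*(deriv k u)))) := by
        funext u
        ring
      rw [e]
      exact h2'
    have h3 : HasDerivAt (fun u => B*lam*(deriv f u)) (B*lam*(deriv (deriv f) z₀)) z₀ :=
      ((hfd2 z₀ hz₀I).hasDerivAt).const_mul (B*lam)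
    exact (h1.add h2).sub h3
  -- first-order condition
  have hfirst : ψ z₀ = 0 := by
    have := hlocmax.deriv_eq_zero
    rwa [hevd.self_of_nhds] at this
  -- second-order condition
  have hsecond : A*(deriv (deriv k) z₀)
        + ε*(2*((deriv k z₀)*(deriv k z₀) + (k z₀)*(deriv (deriv k) z₀)))
        - B*lam*(deriv (deriv f) z₀) ≤ 0 := by
    have hdd : ∀ᶠ w in 𝓝 z₀, DifferentiableAt ℝ ρ w := by
      filter_upwards [hI_nhds] with t ht
      exact (hρd t ht).differentiableAt
    have hd2 : DifferentiableAt ℝ (deriv ρ) z₀ :=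
      (hevd.differentiableAt_iff).mpr hψd.differentiableAt
    have h := deriv2_nonpos_of_isLocalMax hdd hd2 hlocmax
    have e : deriv (deriv ρ) z₀ = deriv ψ z₀ := hevd.deriv_eq
    rw [e, hψd.deriv] at h
    exact h
  -- conclude
  have hK1 : 0 < deriv k z₀ := deriv_pos_interior hkm hz₀I hI_nhds (hkd z₀ hz₀I) (hk0 z₀ hz₀I)
  have hF1 : 0 < deriv f z₀ := deriv_pos_interior hfm hz₀I hI_nhds (hfd z₀ hz₀I) (hf0 z₀ hz₀I)
  set K1 := deriv k z₀
  set F1 := deriv f z₀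
  set K2 := deriv (deriv k) z₀
  set F2 := deriv (deriv f) z₀
  have heq : (A + 2*ε*(k z₀)) * K1 = B*lam*F1 := by
    have : A*K1 + ε*(2*(k z₀)*K1) - B*lam*F1 = 0 := hfirst
    nlinarith [this]
  have hineq : (A + 2*ε*(k z₀)) * K2 + 2*ε*K1^2 ≤ B*lam*F2 := by nlinarith [hsecond]
  rw [div_lt_div_iff₀ hK1 hF1]
  have h5 : ((A + 2*ε*(k z₀)) * K2 + 2*ε*K1^2) * F1 ≤ (B*lam*F2)*F1 :=
    mul_le_mul_of_nonneg_right hineq hF1.le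
  have h6 : B*lam*F2*F1 = (A + 2*ε*(k z₀))*K1*F2 := by
    linear_combination (-F2) * heq
  nlinarith [h5, h6, mul_pos (mul_pos hε (pow_pos hK1 2)) hF1, hpos,
    mul_pos hpos hK1]

lemma eps_exists {M A d : ℝ} (hM : 0 ≤ M) (hA : 0 < A) (hd : 0 < d) :
    ∃ ε : ℝ, 0 < ε ∧ 2*ε*M < A ∧ 2*ε*M^2 < d := by
  have hd1 : (0:ℝ) < 2*M+1 := by nlinarith
  have hd2 : (0:ℝ) < 2*M^2+1 := by nlinarith
  refine ⟨min (A/(2*M+1)) (d/(2*M^2+1)), lt_min (div_pos hA hd1) (div_pos hd hd2), ?_, ?_⟩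
  · have h1 : min (A/(2*M+1)) (d/(2*M^2+1)) ≤ A/(2*M+1) := min_le_left _ _
    have h2 : 2*(A/(2*M+1))*M < A := by
      rw [show 2*(A/(2*M+1))*M = (2*A*M)/(2*M+1) by ring, div_lt_iff₀ hd1]
      nlinarith
    nlinarith [h1, h2, hM]
  · have h1 : min (A/(2*M+1)) (d/(2*M^2+1)) ≤ d/(2*M^2+1) := min_le_right _ _
    have h2 : 2*(d/(2*M^2+1))*M^2 < d := by
      rw [show 2*(d/(2*M^2+1))*M^2 = (2*d*M^2)/(2*M^2+1) by ring, div_lt_iff₀ hd2]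
      nlinarith
    nlinarith [h1, h2, sq_nonneg M]

set_option maxHeartbeats 1000000 in
lemma main_cvx {I : Set ℝ} (hI : I.OrdConnected) {k s f g : ℝ → ℝ}
    (hkd : ∀ w ∈ I, DifferentiableAt ℝ k w) (hkd2 : ∀ w ∈ I, DifferentiableAt ℝ (deriv k) w)
    (hk0 : ∀ w ∈ I, deriv k w ≠ 0) (hkm : StrictMonoOn k I)
    (hsm : StrictMonoOn s I) (hsc : ContinuousOn s I)
    (hfd : ∀ w ∈ I, DifferentiableAt ℝ f w) (hfd2 : ∀ w ∈ I, DifferentiableAt ℝ (deriv f) w)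
    (hf0 : ∀ w ∈ I, deriv f w ≠ 0) (hfm : StrictMonoOn f I)
    (hgd : ∀ w ∈ I, DifferentiableAt ℝ g w) (hgd2 : ∀ w ∈ I, DifferentiableAt ℝ (deriv g) w)
    (hg0 : ∀ w ∈ I, deriv g w ≠ 0) (hgm : StrictMonoOn g I)
    (hfs : CvxWrt I f s) (hgs : CvxWrt I g s)
    (hminle : ∀ z ∈ I, min (deriv (deriv f) z / deriv f z) (deriv (deriv g) z / deriv g z)
      ≤ deriv (deriv k) z / deriv k z) :
    CvxWrt I k s := by
  intro x hx z hz y hy hxz hzy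
  by_contra hcon
  push_neg at hcon
  have hxy : x < y := hxz.trans hzy
  have hIcxy : Icc x y ⊆ I := hI.out hx hy
  have hA : 0 < s y - s x := sub_pos.mpr (hsm hx hy hxy)
  have hB : 0 < k y - k x := sub_pos.mpr (hkm hx hy hxy)
  have hkc : ContinuousOn k I := fun w hw => (hkd w hw).continuousAt.continuousWithinAt
  have hxmem : x ∈ Icc x y := left_mem_Icc.mpr hxy.le
  have hzmem : z ∈ Icc x y := ⟨hxz.le, hzy.le⟩
  have hymem : y ∈ Icc x y := right_mem_Icc.mpr hxy.le
  obtain ⟨t₀, ht₀, hMmax⟩ := isCompact_Icc.exists_isMaxOn (⟨x, hxmem⟩ : (Icc x y).Nonempty)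
    ((hkc.mono hIcxy).abs)
  have hMb : ∀ t ∈ Icc x y, |k t| ≤ |k t₀| := fun t ht => hMmax ht
  have hM0 : 0 ≤ |k t₀| := abs_nonneg _
  have hδ : 0 < ((s y - s x) * (k z) - (k y - k x) * (s z))
      - ((s y - s x) * (k x) - (k y - k x) * (s x)) := by nlinarith [hcon]
  obtain ⟨ε, hε, hεM, hεM2⟩ := eps_exists hM0 hA hδ
  rw [sq_abs] at hεM2
  set A := s y - s x
  set B := k y - k x
  set Dε : ℝ → ℝ := fun t => A*(k t) + ε*(k t)^2 - B*(s t) with hDεdef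
  have hsq : ∀ t ∈ Icc x y, (k t)^2 ≤ (k t₀)^2 := by
    intro t ht
    have h := hMb t ht
    nlinarith [abs_nonneg (k t), sq_abs (k t), sq_abs (k t₀)]
  have hDεc : ContinuousOn Dε (Icc x y) := by
    apply ContinuousOn.sub
    · exact (continuousOn_const.mul (hkc.mono hIcxy)).add
        (continuousOn_const.mul ((hkc.mono hIcxy).pow 2))
    · exact continuousOn_const.mul (hsc.mono hIcxy)
  obtain ⟨z₀, hz₀Icc, hz₀max⟩ := isCompact_Icc.exists_isMaxOn ⟨x, hxmem⟩ hDεc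
  have hmaxpt : ∀ t ∈ Icc x y, Dε t ≤ Dε z₀ := fun t ht => hz₀max ht
  have hgapx : Dε x < Dε z := by
    show A*(k x) + ε*(k x)^2 - B*(s x) < A*(k z) + ε*(k z)^2 - B*(s z)
    have h1 := hsq z hzmem
    have h2 := hsq x hxmem
    have h3 : ε * (k x)^2 ≤ ε * (k t₀)^2 := mul_le_mul_of_nonneg_left h2 hε.le
    linarith [h3, hεM2, mul_nonneg hε.le (sq_nonneg (k z)),
      mul_nonneg hε.le (sq_nonneg (k t₀))]
  have hgapy : Dε y < Dε z := by
    show A*(k y) + ε*(k y)^2 - B*(s y) < A*(k z) + ε*(k z)^2 - B*(s z)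
    have h1 := hsq z hzmem
    have h2 := hsq y hymem
    have h3 : ε * (k y)^2 ≤ ε * (k t₀)^2 := mul_le_mul_of_nonneg_left h2 hε.le
    have hDyx : A * (k y) - B * (s y) = A * (k x) - B * (s x) := by ring
    linarith [h3, hεM2, mul_nonneg hε.le (sq_nonneg (k z)),
      mul_nonneg hε.le (sq_nonneg (k t₀))]
  have hz₀x : x ≠ z₀ := by
    rintro rfl
    exact absurd (hmaxpt z hzmem) (not_le.mpr hgapx)
  have hz₀y : z₀ ≠ y := by
    rintro rfl
    exact absurd (hmaxpt z hzmem) (not_le.mpr hgapy)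
  have hz₀Ioo : z₀ ∈ Ioo x y :=
    ⟨lt_of_le_of_ne hz₀Icc.1 hz₀x, lt_of_le_of_ne hz₀Icc.2 hz₀y⟩
  have hz₀I : z₀ ∈ I := hIcxy hz₀Icc
  have hpos : 0 < A + 2*ε*(k z₀) := by
    have h1 : |k z₀| ≤ |k t₀| := hMb z₀ hz₀Icc
    have h2 : -(|k t₀|) ≤ k z₀ := neg_le_of_abs_le h1
    nlinarith [hεM, hε]
  have hrf := step hIcxy hkd hkd2 hk0 hkm hfd hfd2 hf0 hfm hfs hz₀Ioo hB hε hpos hmaxpt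
  have hrg := step hIcxy hkd hkd2 hk0 hkm hgd hgd2 hg0 hgm hgs hz₀Ioo hB hε hpos hmaxpt
  have hm := hminle z₀ hz₀I
  have hlt := lt_min hrf hrg
  linarith

lemma image_ordConnected {I : Set ℝ} (hI : I.OrdConnected) {K : ℝ → ℝ}
    (hc : ContinuousOn K I) : (K '' I).OrdConnected := by
  constructor
  rintro _ ⟨p, hp, rfl⟩ _ ⟨q, hq, rfl⟩ w hw
  have hsub : uIcc p q ⊆ I := hI.uIcc_subset hp hq
  have : w ∈ uIcc (K p) (K q) := Icc_subset_uIcc hw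
  obtain ⟨t, ht, hKt⟩ := intermediate_value_uIcc (hc.mono hsub) this
  exact ⟨t, hsub ht, hKt⟩

/-- From the three-point chord condition, the quasi-arithmetic mean inequality
`A^[K] ≤ A^[F]`. -/
lemma qale_of_cvxWrt {I : Set ℝ} (hI : I.OrdConnected) {F K : ℝ → ℝ}
    (hFm : StrictMonoOn F I) (hKm : StrictMonoOn K I) (hKc : ContinuousOn K I)
    (hcvx : CvxWrt I F K) : QALE I K F := by
  intro n hn v hv a b ⟨haI, hKa⟩ ⟨hbI, hFb⟩
  haveI : Nonempty ℝ := ⟨0⟩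
  set u : ℝ → ℝ := F ∘ Function.invFunOn K I with hu
  have hKinj : InjOn K I := hKm.injOn
  have huK : ∀ w ∈ I, u (K w) = F w := by
    intro w hw
    simp only [hu, Function.comp_apply]
    rw [hKinj.leftInvOn_invFunOn hw]
  have himg : (K '' I).OrdConnected := image_ordConnected hI hKc
  have hcvxS : Convex ℝ (K '' I) := convex_iff_ordConnected.mpr himg
  have huc : ConvexOn ℝ (K '' I) u := by
    apply convexOn_of_slope_mono_adjacent hcvxS
    intro p q r hp hr hpq hqr
    have hq : q ∈ K '' I := himg.out hp hr ⟨hpq.le, hqr.le⟩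
    obtain ⟨xp, hxp, rfl⟩ := hp
    obtain ⟨xq, hxq, rfl⟩ := hq
    obtain ⟨xr, hxr, rfl⟩ := hr
    have h1 : xp < xq := by
      by_contra hcon
      push_neg at hcon
      rcases eq_or_lt_of_le hcon with rfl | hlt
      · exact lt_irrefl _ hpq
      · exact absurd (hKm hxq hxp hlt) (not_lt.mpr hpq.le)
    have h2 : xq < xr := by
      by_contra hcon
      push_neg at hcon
      rcases eq_or_lt_of_le hcon with rfl | hlt
      · exact lt_irrefl _ hqr
      · exact absurd (hKm hxr hxq hlt) (not_lt.mpr hqr.le)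
    rw [huK xp hxp, huK xq hxq, huK xr hxr]
    rw [div_le_div_iff₀ (by linarith : (0:ℝ) < K xq - K xp) (by linarith : (0:ℝ) < K xr - K xq)]
    have := hcvx xp hxp xq hxq xr hxr h1 h2
    nlinarith [this]
  -- Jensen
  have hmem : ∀ i ∈ Finset.univ, K (v i) ∈ K '' I := fun i _ => ⟨v i, hv i, rfl⟩
  have hw0 : ∀ i ∈ Finset.univ, (0:ℝ) ≤ (fun _ : Fin n => (1:ℝ)) i := fun _ _ => zero_le_one
  have hwsum : (0:ℝ) < ∑ _i : Fin n, (1:ℝ) := by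
    simp only [Finset.sum_const, Finset.card_univ, Fintype.card_fin, nsmul_eq_mul, mul_one]
    exact_mod_cast hn
  have hjensen := huc.map_centerMass_le hw0 hwsum hmem
  have hcm : Finset.univ.centerMass (fun _ : Fin n => (1:ℝ)) (fun i => K (v i))
      = (∑ i, K (v i)) / n := by
    rw [Finset.centerMass]
    simp only [Finset.sum_const, Finset.card_univ, Fintype.card_fin, nsmul_eq_mul, mul_one,
      one_smul, smul_eq_mul, one_mul]
    rw [div_eq_inv_mul]
  have hcm2 : Finset.univ.centerMass (fun _ : Fin n => (1:ℝ))
      (u ∘ (fun i => K (v i))) = (∑ i, F (v i)) / n := by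
    rw [Finset.centerMass]
    have he : ∀ i : Fin n, u (K (v i)) = F (v i) := fun i => huK (v i) (hv i)
    simp only [Function.comp_apply, he, Finset.sum_const, Finset.card_univ, Fintype.card_fin,
      nsmul_eq_mul, mul_one, one_smul, smul_eq_mul, one_mul]
    rw [div_eq_inv_mul]
  have hFa : F a ≤ F b := by
    have h' : u (K a) = F a := huK a haI
    rw [← h', hKa, hFb, ← hcm2, ← hcm]
    exact hjensen
  by_contra hab
  push_neg at hab
  exact absurd (hFm hbI haI hab) (not_lt.mpr hFa)

lemma sum_two_blocks {m j : ℕ} (x y : ℝ) (φ : ℝ → ℝ) :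
    ∑ i : Fin (m + j),
        φ (Sum.elim (fun _ : Fin m => x) (fun _ : Fin j => y) (finSumFinEquiv.symm i))
      = m * φ x + j * φ y := by
  rw [← Equiv.sum_comp (finSumFinEquiv : Fin m ⊕ Fin j ≃ Fin (m + j))
    (fun i => φ (Sum.elim (fun _ : Fin m => x) (fun _ : Fin j => y) (finSumFinEquiv.symm i)))]
  simp only [Equiv.symm_apply_apply]
  rw [Fintype.sum_sum_type]
  simp [Finset.sum_const, mul_comm]

set_option maxHeartbeats 1000000 in
lemma cvxWrt_of_qale {I : Set ℝ} (hI : I.OrdConnected) {s F : ℝ → ℝ}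
    (hsm : StrictMonoOn s I) (hsc : ContinuousOn s I)
    (hFm : StrictMonoOn F I) (hFc : ContinuousOn F I)
    (h : QALE I s F) : CvxWrt I F s := by
  intro x hx z hz y hy hxz hzy
  have hxy : x < y := hxz.trans hzy
  have hIcc : Icc x y ⊆ I := hI.out hx hy
  have hs1 : s x < s z := hsm hx hz hxz
  have hs2 : s z < s y := hsm hz hy hzy
  have hF1 : F x < F z := hFm hx hz hxz
  have hF2 : F z < F y := hFm hz hy hzy
  have hsd : (0:ℝ) < s y - s x := by linarith
  have hFd : (0:ℝ) < F y - F x := by linarith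
  set θ : ℝ := (s z - s x)/(s y - s x) with hθdef
  have hθpos : 0 < θ := div_pos (by linarith) hsd
  -- key rational-weight inequality
  have key : ∀ q : ℚ, θ < (q:ℝ) → (q:ℝ) < 1 → F z - F x ≤ q * (F y - F x) := by
    intro q hq1 hq2
    have hq0 : (0:ℝ) < (q:ℝ) := lt_trans hθpos hq1
    have hq0' : 0 < q := by exact_mod_cast hq0
    have hq2' : q < 1 := by exact_mod_cast hq2
    set j : ℕ := q.num.toNat with hjdef
    set d : ℕ := q.den with hddef
    have hnum_pos : 0 < q.num := Rat.num_pos.mpr hq0'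
    have hjZ : (j:ℤ) = q.num := Int.toNat_of_nonneg hnum_pos.le
    have hjcast : (j:ℝ) = (q.num : ℝ) := by exact_mod_cast hjZ
    have hd0 : 0 < d := q.pos
    have hdpos : (0:ℝ) < (d:ℝ) := by exact_mod_cast hd0
    have hqcast : (q:ℝ) = (j:ℝ)/(d:ℝ) := by
      rw [Rat.cast_def, hjcast]
    have hjd : j < d := by
      have h1 : (j:ℝ)/(d:ℝ) < 1 := by rw [← hqcast]; exact hq2
      have h2 : (j:ℝ) < (d:ℝ) := by
        rw [div_lt_one hdpos] at h1
        exact h1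
      exact_mod_cast h2
    set m : ℕ := d - j with hmdef
    have hmj : m + j = d := by omega
    have hn : 0 < m + j := by omega
    have hdcast : ((m + j : ℕ):ℝ) = (d:ℝ) := by exact_mod_cast congrArg (Nat.cast : ℕ → ℝ) hmj
    have hmcast : (m:ℝ) = (d:ℝ) - (j:ℝ) := by
      have hle : j ≤ d := hjd.le
      rw [hmdef]
      push_cast [Nat.cast_sub hle]
      ring
    set v : Fin (m + j) → ℝ :=
      fun i => Sum.elim (fun _ : Fin m => x) (fun _ : Fin j => y) (finSumFinEquiv.symm i) with hvdef
    have hvI : ∀ i, v i ∈ I := by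
      intro i
      rw [hvdef]
      cases h' : finSumFinEquiv.symm i with
      | inl p => simp only [h', Sum.elim_inl]; exact hx
      | inr p => simp only [h', Sum.elim_inr]; exact hy
    have hsum_s : ∑ i, s (v i) = m * s x + j * s y := sum_two_blocks x y s
    have hsum_F : ∑ i, F (v i) = m * F x + j * F y := sum_two_blocks x y F
    -- the s-mean point a
    have hws : s x ≤ ((m:ℝ) * s x + (j:ℝ) * s y) / ((m+j:ℕ):ℝ)
        ∧ ((m:ℝ) * s x + (j:ℝ) * s y) / ((m+j:ℕ):ℝ) ≤ s y := by
      rw [hdcast]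
      constructor
      · rw [le_div_iff₀ hdpos, hmcast]
        have hj0 : (0:ℝ) ≤ (j:ℝ) := Nat.cast_nonneg _
        nlinarith [mul_nonneg hj0 hsd.le]
      · rw [div_le_iff₀ hdpos, hmcast]
        have hjle : (0:ℝ) ≤ (d:ℝ) - (j:ℝ) := by
          have : (j:ℝ) ≤ (d:ℝ) := by exact_mod_cast hjd.le
          linarith
        nlinarith [mul_nonneg hjle hsd.le]
    obtain ⟨a, haIcc, hsa⟩ := intermediate_value_Icc hxy.le (hsc.mono hIcc) hws
    have haI : a ∈ I := hIcc haIcc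
    have hwF : F x ≤ ((m:ℝ) * F x + (j:ℝ) * F y) / ((m+j:ℕ):ℝ)
        ∧ ((m:ℝ) * F x + (j:ℝ) * F y) / ((m+j:ℕ):ℝ) ≤ F y := by
      rw [hdcast]
      constructor
      · rw [le_div_iff₀ hdpos, hmcast]
        have hj0 : (0:ℝ) ≤ (j:ℝ) := Nat.cast_nonneg _
        nlinarith [mul_nonneg hj0 hFd.le]
      · rw [div_le_iff₀ hdpos, hmcast]
        have hjle : (0:ℝ) ≤ (d:ℝ) - (j:ℝ) := by
          have : (j:ℝ) ≤ (d:ℝ) := by exact_mod_cast hjd.le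
          linarith
        nlinarith [mul_nonneg hjle hFd.le]
    obtain ⟨b, hbIcc, hFb⟩ := intermediate_value_Icc hxy.le (hFc.mono hIcc) hwF
    have hbI : b ∈ I := hIcc hbIcc
    have hab : a ≤ b := by
      apply h (m + j) hn v hvI a b
      · exact ⟨haI, by rw [hsum_s, hsa]⟩
      · exact ⟨hbI, by rw [hsum_F, hFb]⟩
    -- z ≤ a
    have hsza : s z ≤ s a := by
      rw [hsa, hdcast]
      have hθq : θ * (s y - s x) = s z - s x := by
        rw [hθdef]; field_simp
      have h1 : ((m:ℝ) * s x + (j:ℝ) * s y)/(d:ℝ) = s x + ((j:ℝ)/(d:ℝ)) * (s y - s x) := by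
        rw [hmcast]; field_simp; ring
      rw [h1, ← hqcast]
      linarith [mul_le_mul_of_nonneg_right hq1.le hsd.le, hθq]
    have hza : z ≤ a := (hsm.le_iff_le hz haI).mp hsza
    have hzb : z ≤ b := le_trans hza hab
    have hFzb : F z ≤ F b := by
      rcases eq_or_lt_of_le hzb with rfl | hlt
      · exact le_refl _
      · exact (hFm hz hbI hlt).le
    rw [hFb, hdcast] at hFzb
    have h1 : ((m:ℝ) * F x + (j:ℝ) * F y)/(d:ℝ) = F x + ((j:ℝ)/(d:ℝ)) * (F y - F x) := by
      rw [hmcast]; field_simp; ring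
    rw [h1, ← hqcast] at hFzb
    linarith
  -- conclude from the rational-weight inequality
  by_contra hcon
  push_neg at hcon
  set R : ℝ := (F z - F x)/(F y - F x) with hRdef
  have hθR : θ < R := by
    rw [hθdef, hRdef, div_lt_div_iff₀ hsd hFd]
    nlinarith [hcon]
  have hR1 : R < 1 := by
    rw [hRdef, div_lt_one hFd]
    linarith
  obtain ⟨q, hq1, hq2⟩ := exists_rat_btwn hθR
  have := key q hq1 (hq2.trans hR1)
  have hRq : R ≤ (q:ℝ) := by
    rw [hRdef, div_le_iff₀ hFd]
    linarith
  linarith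

lemma isQAM_neg_iff {I : Set ℝ} {f : ℝ → ℝ} {n : ℕ} {v : Fin n → ℝ} {m : ℝ} :
    IsQAM I (fun t => -(f t)) v m ↔ IsQAM I f v m := by
  unfold IsQAM
  refine and_congr_right fun _ => ?_
  show -(f m) = (∑ i, -(f (v i))) / (n:ℝ) ↔ _
  rw [Finset.sum_neg_distrib, neg_div, neg_inj]

lemma qale_congr {I : Set ℝ} {A A' B B' : ℝ → ℝ}
    (hA : ∀ (n : ℕ) (v : Fin n → ℝ) (m : ℝ), IsQAM I A' v m ↔ IsQAM I A v m)
    (hB : ∀ (n : ℕ) (v : Fin n → ℝ) (m : ℝ), IsQAM I B' v m ↔ IsQAM I B v m)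
    (h : QALE I A B) : QALE I A' B' := by
  intro n hn v hv a b ha hb
  exact h n hn v hv a b ((hA n v a).mp ha) ((hB n v b).mp hb)

lemma normalize_smooth {I : Set ℝ} {f : ℝ → ℝ}
    (hfd : ∀ x ∈ I, DifferentiableAt ℝ f x) (hfd2 : ∀ x ∈ I, DifferentiableAt ℝ (deriv f) x)
    (hf0 : ∀ x ∈ I, deriv f x ≠ 0) (hf : StrictMonoOn f I ∨ StrictAntiOn f I) :
    ∃ F : ℝ → ℝ, StrictMonoOn F I ∧ (∀ x ∈ I, DifferentiableAt ℝ F x) ∧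
      (∀ x ∈ I, DifferentiableAt ℝ (deriv F) x) ∧ (∀ x ∈ I, deriv F x ≠ 0) ∧
      (∀ x ∈ I, deriv (deriv F) x / deriv F x = deriv (deriv f) x / deriv f x) ∧
      (∀ (n : ℕ) (v : Fin n → ℝ) (m : ℝ), IsQAM I F v m ↔ IsQAM I f v m) := by
  rcases hf with hmono | hanti
  · exact ⟨f, hmono, hfd, hfd2, hf0, fun x _ => rfl, fun n v m => Iff.rfl⟩
  · refine ⟨fun t => -(f t), hanti.neg, fun x hx => (hfd x hx).neg, ?_, ?_, ?_, ?_⟩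
    · intro x hx
      have hder : deriv (fun t => -(f t)) = fun t => -(deriv f t) :=
        funext fun t => deriv.neg
      rw [hder]
      exact (hfd2 x hx).neg
    · intro x hx
      have hder : deriv (fun t => -(f t)) = fun t => -(deriv f t) :=
        funext fun t => deriv.neg
      rw [hder]
      simpa using hf0 x hx
    · intro x hx
      have hder : deriv (fun t => -(f t)) = fun t => -(deriv f t) :=
        funext fun t => deriv.neg
      rw [hder]
      have hder2 : deriv (fun t => -(deriv f t)) x = -(deriv (deriv f) x) := deriv.neg
      rw [hder2]
      show -(deriv (deriv f) x) / -(deriv f x) = _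
      rw [neg_div_neg_eq]
    · intro n v m
      exact isQAM_neg_iff

lemma normalize_cont {I : Set ℝ} {s : ℝ → ℝ} (hsc : ContinuousOn s I)
    (hs : StrictMonoOn s I ∨ StrictAntiOn s I) :
    ∃ S : ℝ → ℝ, StrictMonoOn S I ∧ ContinuousOn S I ∧
      (∀ (n : ℕ) (v : Fin n → ℝ) (m : ℝ), IsQAM I S v m ↔ IsQAM I s v m) := by
  rcases hs with hmono | hanti
  · exact ⟨s, hmono, hsc, fun n v m => Iff.rfl⟩
  · exact ⟨fun t => -(s t), hanti.neg, hsc.neg, fun n v m => isQAM_neg_iff⟩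

lemma mono_of_deriv_ne {I : Set ℝ} (hI : I.OrdConnected) {k : ℝ → ℝ}
    (hkd : ∀ x ∈ I, DifferentiableAt ℝ k x) (hkd2 : ∀ x ∈ I, DifferentiableAt ℝ (deriv k) x)
    (hk0 : ∀ x ∈ I, deriv k x ≠ 0) :
    StrictMonoOn k I ∨ StrictAntiOn k I := by
  by_cases hne : I.Nonempty
  · obtain ⟨x₀, hx₀⟩ := hne
    have hkc : ContinuousOn k I := fun w hw => (hkd w hw).continuousAt.continuousWithinAt
    have hk'c : ContinuousOn (deriv k) I :=
      fun w hw => (hkd2 w hw).continuousAt.continuousWithinAt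
    have hconv : Convex ℝ I := convex_iff_ordConnected.mpr hI
    rcases (hk0 x₀ hx₀).lt_or_gt with hneg | hpos
    · right
      have hall : ∀ z ∈ I, deriv k z < 0 := by
        intro z hz
        rcases (hk0 z hz).lt_or_gt with h | h
        · exact h
        · exfalso
          have hsub : uIcc x₀ z ⊆ I := hI.uIcc_subset hx₀ hz
          have h0 : (0:ℝ) ∈ uIcc (deriv k x₀) (deriv k z) := by
            rw [mem_uIcc]
            left
            exact ⟨hneg.le, h.le⟩
          obtain ⟨w, hw, hw0⟩ := intermediate_value_uIcc (hk'c.mono hsub) h0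
          exact hk0 w (hsub hw) hw0
      exact strictAntiOn_of_deriv_neg hconv hkc
        (fun w hw => hall w (interior_subset hw))
    · left
      have hall : ∀ z ∈ I, 0 < deriv k z := by
        intro z hz
        rcases (hk0 z hz).lt_or_gt with h | h
        · exfalso
          have hsub : uIcc x₀ z ⊆ I := hI.uIcc_subset hx₀ hz
          have h0 : (0:ℝ) ∈ uIcc (deriv k x₀) (deriv k z) := by
            rw [mem_uIcc]
            right
            exact ⟨h.le, hpos.le⟩
          obtain ⟨w, hw, hw0⟩ := intermediate_value_uIcc (hk'c.mono hsub) h0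
          exact hk0 w (hsub hw) hw0
        · exact h
      exact strictMonoOn_of_deriv_pos hconv hkc
        (fun w hw => hall w (interior_subset hw))
  · left
    intro a ha
    exact absurd ⟨a, ha⟩ hne

/-- The monotone-increasing version of the main theorem. -/
lemma qale_inf_mono
    (I : Set ℝ) (hI : I.OrdConnected)
    (f g k : ℝ → ℝ)
    (hfd : ∀ x ∈ I, DifferentiableAt ℝ f x) (hfd2 : ∀ x ∈ I, DifferentiableAt ℝ (deriv f) x)
    (hf0 : ∀ x ∈ I, deriv f x ≠ 0) (hfm : StrictMonoOn f I)
    (hgd : ∀ x ∈ I, DifferentiableAt ℝ g x) (hgd2 : ∀ x ∈ I, DifferentiableAt ℝ (deriv g) x)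
    (hg0 : ∀ x ∈ I, deriv g x ≠ 0) (hgm : StrictMonoOn g I)
    (hkd : ∀ x ∈ I, DifferentiableAt ℝ k x) (hkd2 : ∀ x ∈ I, DifferentiableAt ℝ (deriv k) x)
    (hk0 : ∀ x ∈ I, deriv k x ≠ 0) (hkm : StrictMonoOn k I)
    (hmin : ∀ x ∈ I,
      deriv (deriv k) x / deriv k x =
        min (deriv (deriv f) x / deriv f x) (deriv (deriv g) x / deriv g x)) :
    (QALE I k f ∧ QALE I k g) ∧
      ∀ s : ℝ → ℝ, ContinuousOn s I → StrictMonoOn s I →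
        QALE I s f → QALE I s g → QALE I s k := by
  have hkc : ContinuousOn k I := fun w hw => (hkd w hw).continuousAt.continuousWithinAt
  have hfc : ContinuousOn f I := fun w hw => (hfd w hw).continuousAt.continuousWithinAt
  have hgc : ContinuousOn g I := fun w hw => (hgd w hw).continuousAt.continuousWithinAt
  constructor
  · constructor
    · -- QALE I k f
      have hminf : ∀ z ∈ I, min (deriv (deriv k) z / deriv k z) (deriv (deriv k) z / deriv k z)
          ≤ deriv (deriv f) z / deriv f z := by
        intro z hz
        rw [min_self, hmin z hz]
        exact min_le_left _ _
      have hcvx : CvxWrt I f k :=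
        main_cvx hI hfd hfd2 hf0 hfm hkm hkc hkd hkd2 hk0 hkm hkd hkd2 hk0 hkm
          (cvxWrt_self I k) (cvxWrt_self I k) hminf
      exact qale_of_cvxWrt hI hfm hkm hkc hcvx
    · -- QALE I k g
      have hming : ∀ z ∈ I, min (deriv (deriv k) z / deriv k z) (deriv (deriv k) z / deriv k z)
          ≤ deriv (deriv g) z / deriv g z := by
        intro z hz
        rw [min_self, hmin z hz]
        exact min_le_right _ _
      have hcvx : CvxWrt I g k :=
        main_cvx hI hgd hgd2 hg0 hgm hkm hkc hkd hkd2 hk0 hkm hkd hkd2 hk0 hkm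
          (cvxWrt_self I k) (cvxWrt_self I k) hming
      exact qale_of_cvxWrt hI hgm hkm hkc hcvx
  · intro s hsc hsm hsf hsg
    have hfs : CvxWrt I f s := cvxWrt_of_qale hI hsm hsc hfm hfc hsf
    have hgs : CvxWrt I g s := cvxWrt_of_qale hI hsm hsc hgm hgc hsg
    have hminle : ∀ z ∈ I, min (deriv (deriv f) z / deriv f z) (deriv (deriv g) z / deriv g z)
        ≤ deriv (deriv k) z / deriv k z := fun z hz => (hmin z hz).ge
    have hck : CvxWrt I k s :=
      main_cvx hI hkd hkd2 hk0 hkm hsm hsc hfd hfd2 hf0 hfm hgd hgd2 hg0 hgm hfs hgs hminle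
    exact qale_of_cvxWrt hI hkm hsm hsc hck

/-- if `k` is C² with `k' ≠ 0` and `k''/k' = min (f''/f') (g''/g')` on
`I`, then `A^[k] ≤ A^[f]`, `A^[k] ≤ A^[g]`, and `k` generates the greatest lower
bound among all quasi-arithmetic means. -/
theorem qale_inf
    (I : Set ℝ) (hI : I.OrdConnected)
    (f g k : ℝ → ℝ)
    (hfd : ∀ x ∈ I, DifferentiableAt ℝ f x) (hfd2 : ∀ x ∈ I, DifferentiableAt ℝ (deriv f) x)
    (hfc2 : ContinuousOn (deriv (deriv f)) I)
    (hf0 : ∀ x ∈ I, deriv f x ≠ 0)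
    (hf : StrictMonoOn f I ∨ StrictAntiOn f I)
    (hgd : ∀ x ∈ I, DifferentiableAt ℝ g x) (hgd2 : ∀ x ∈ I, DifferentiableAt ℝ (deriv g) x)
    (hgc2 : ContinuousOn (deriv (deriv g)) I)
    (hg0 : ∀ x ∈ I, deriv g x ≠ 0)
    (hg : StrictMonoOn g I ∨ StrictAntiOn g I)
    (hkd : ∀ x ∈ I, DifferentiableAt ℝ k x) (hkd2 : ∀ x ∈ I, DifferentiableAt ℝ (deriv k) x)
    (hkc2 : ContinuousOn (deriv (deriv k)) I)
    (hk0 : ∀ x ∈ I, deriv k x ≠ 0)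
    (hmin : ∀ x ∈ I,
      deriv (deriv k) x / deriv k x =
        min (deriv (deriv f) x / deriv f x) (deriv (deriv g) x / deriv g x)) :
    (QALE I k f ∧ QALE I k g) ∧
      ∀ s : ℝ → ℝ, ContinuousOn s I → (StrictMonoOn s I ∨ StrictAntiOn s I) →
        QALE I s f → QALE I s g → QALE I s k := by
  have hkmono : StrictMonoOn k I ∨ StrictAntiOn k I := mono_of_deriv_ne hI hkd hkd2 hk0
  obtain ⟨F, hFm, hFd, hFd2, hF0, hFr, hFq⟩ := normalize_smooth hfd hfd2 hf0 hf
  obtain ⟨G, hGm, hGd, hGd2, hG0, hGr, hGq⟩ := normalize_smooth hgd hgd2 hg0 hg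
  obtain ⟨K, hKm, hKd, hKd2, hK0, hKr, hKq⟩ := normalize_smooth hkd hkd2 hk0 hkmono
  have hmin' : ∀ x ∈ I, deriv (deriv K) x / deriv K x =
      min (deriv (deriv F) x / deriv F x) (deriv (deriv G) x / deriv G x) := by
    intro x hx
    rw [hKr x hx, hFr x hx, hGr x hx]
    exact hmin x hx
  obtain ⟨⟨h1, h2⟩, h3⟩ := qale_inf_mono I hI F G K hFd hFd2 hF0 hFm hGd hGd2 hG0 hGm
    hKd hKd2 hK0 hKm hmin'
  refine ⟨⟨qale_congr ?_ ?_ h1, qale_congr ?_ ?_ h2⟩, ?_⟩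
  · intro n v m; exact (hKq n v m).symm
  · intro n v m; exact (hFq n v m).symm
  · intro n v m; exact (hKq n v m).symm
  · intro n v m; exact (hGq n v m).symm
  · intro s hsc hs hsf hsg
    obtain ⟨S, hSm, hSc, hSq⟩ := normalize_cont hsc hs
    have hSF : QALE I S F := qale_congr (fun n v m => hSq n v m) (fun n v m => hFq n v m) hsf
    have hSG : QALE I S G := qale_congr (fun n v m => hSq n v m) (fun n v m => hGq n v m) hsg
    have := h3 S hSc hSm hSF hSG
    exact qale_congr (fun n v m => (hSq n v m).symm) (fun n v m => (hKq n v m).symm) this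
end

section
/- Let I = (−π/2, π/2), f = sin and g = tan on I. Define h : I → ℝ by h(x) = sin x for x ≤ 0 and h(x) = tan x for x > 0. Then h is twice continuously differentiable on I, h′ is nowhere vanishing, and h″(x)/h′(x) = max(f″(x)/f′(x), g″(x)/g′(x)) = max(−tan x, 2 tan x) for all x ∈ I. -/
open Set Real

private lemma aux_inv_sq {x : ℝ} (hc : Real.cos x ≠ 0) :
    HasDerivAt (fun y => 1 / Real.cos y ^ 2) (2 * Real.sin x / Real.cos x ^ 3) x := by
  have h1 : HasDerivAt (fun y => Real.cos y ^ 2)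
      ((2 : ℕ) * Real.cos x ^ (2 - 1) * (-Real.sin x)) x := (Real.hasDerivAt_cos x).pow 2
  have h2 := h1.inv (pow_ne_zero 2 hc)
  simp only [one_div]
  refine h2.congr_deriv ?_
  field_simp
  ring

/-- on `I = (−π/2, π/2)`, the function `h` equal to `sin` on `(−π/2, 0]`
and to `tan` on `(0, π/2)` is C² with nowhere vanishing derivative, and its
Arrow–Pratt index is `max ((sin)''/(sin)') ((tan)''/(tan)') = max (−tan x) (2·tan x)`. -/
theorem sin_tan_glue
    (h : ℝ → ℝ) (hh : ∀ x, h x = if x ≤ 0 then Real.sin x else Real.tan x) :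
    ContDiffOn ℝ 2 h (Set.Ioo (-(π / 2)) (π / 2)) ∧
      ∀ x ∈ Set.Ioo (-(π / 2)) (π / 2),
        deriv h x ≠ 0 ∧
        deriv (deriv h) x / deriv h x =
          max (deriv (deriv Real.sin) x / deriv Real.sin x)
            (deriv (deriv Real.tan) x / deriv Real.tan x) ∧
        deriv (deriv h) x / deriv h x = max (-Real.tan x) (2 * Real.tan x) := by
  set I := Set.Ioo (-(π / 2)) (π / 2) with hI
  have hIopen : IsOpen I := isOpen_Ioo
  have hcos : ∀ x ∈ I, 0 < Real.cos x := fun x hx => Real.cos_pos_of_mem_Ioo hx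
  set h1 : ℝ → ℝ := fun x => if x ≤ 0 then Real.cos x else 1 / Real.cos x ^ 2 with hh1
  set h2 : ℝ → ℝ := fun x => if x ≤ 0 then -Real.sin x else 2 * Real.sin x / Real.cos x ^ 3
    with hh2
  -- first derivative
  have key1 : ∀ x ∈ I, HasDerivAt h (h1 x) x := by
    intro x hx
    rcases lt_trichotomy x 0 with hx0 | hx0 | hx0
    · have he : h =ᶠ[nhds x] Real.sin := by
        filter_upwards [Iio_mem_nhds hx0] with y hy
        rw [hh y, if_pos hy.le]
      have := (Real.hasDerivAt_sin x).congr_of_eventuallyEq he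
      simpa [hh1, hx0.le] using this
    · subst hx0
      have l : HasDerivWithinAt h 1 (Iic 0) 0 := by
        have := (Real.hasDerivAt_sin 0).hasDerivWithinAt (s := Iic 0)
        rw [Real.cos_zero] at this
        exact this.congr (fun y hy => by rw [hh y, if_pos (show y ≤ 0 from hy)]) (by rw [hh 0, if_pos le_rfl])
      have r : HasDerivWithinAt h 1 (Ici 0) 0 := by
        have ht : HasDerivAt Real.tan (1 / Real.cos 0 ^ 2) 0 :=
          Real.hasDerivAt_tan (by simp)
        rw [Real.cos_zero] at ht; norm_num at ht
        refine (ht.hasDerivWithinAt (s := Ici 0)).congr (fun y hy => ?_)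
          (by rw [hh 0, if_pos le_rfl]; simp)
        rw [hh y]
        split_ifs with h'
        · have : y = 0 := le_antisymm h' hy
          simp [this]
        · rfl
      have := (l.union r).hasDerivAt (by rw [Iic_union_Ici]; exact Filter.univ_mem)
      simpa [hh1] using this
    · have he : h =ᶠ[nhds x] Real.tan := by
        filter_upwards [Ioi_mem_nhds hx0] with y hy
        rw [hh y, if_neg (not_le.2 hy)]
      have := ((Real.hasDerivAt_tan (hcos x hx).ne').congr_of_eventuallyEq he)
      simpa [hh1, not_le.2 hx0] using this
  have eq1 : Set.EqOn (deriv h) h1 I := fun x hx => (key1 x hx).deriv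
  -- second derivative
  have key2 : ∀ x ∈ I, HasDerivAt h1 (h2 x) x := by
    intro x hx
    rcases lt_trichotomy x 0 with hx0 | hx0 | hx0
    · have he : h1 =ᶠ[nhds x] Real.cos := by
        filter_upwards [Iio_mem_nhds hx0] with y hy
        simp [hh1, le_of_lt (show y < 0 from hy)]
      have := (Real.hasDerivAt_cos x).congr_of_eventuallyEq he
      simpa [hh2, hx0.le] using this
    · subst hx0
      have l : HasDerivWithinAt h1 0 (Iic 0) 0 := by
        have := (Real.hasDerivAt_cos 0).hasDerivWithinAt (s := Iic 0)
        rw [Real.sin_zero, neg_zero] at this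
        exact this.congr (fun y hy => by simp [hh1, show y ≤ 0 from hy]) (by simp [hh1])
      have r : HasDerivWithinAt h1 0 (Ici 0) 0 := by
        have ht := aux_inv_sq (x := 0) (by simp)
        rw [Real.sin_zero] at ht; norm_num at ht
        refine (ht.hasDerivWithinAt (s := Ici 0)).congr (fun y hy => ?_) (by simp [hh1])
        simp only [hh1]
        split_ifs with h'
        · have : y = 0 := le_antisymm h' hy
          simp [this]
        · rw [one_div]
      have := (l.union r).hasDerivAt (by rw [Iic_union_Ici]; exact Filter.univ_mem)
      simpa [hh2] using this
    · have he : h1 =ᶠ[nhds x] fun y => 1 / Real.cos y ^ 2 := by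
        filter_upwards [Ioi_mem_nhds hx0] with y hy
        simp [hh1, not_le.2 (mem_Ioi.1 hy)]
      have := (aux_inv_sq (hcos x hx).ne').congr_of_eventuallyEq he
      simpa [hh2, not_le.2 hx0] using this
  have eq2 : ∀ x ∈ I, deriv (deriv h) x = h2 x := by
    intro x hx
    have heq : deriv h =ᶠ[nhds x] h1 := Filter.eventuallyEq_of_mem (hIopen.mem_nhds hx) eq1
    rw [heq.deriv_eq]
    exact (key2 x hx).deriv
  -- continuity of h2 on I
  have hcont2 : ContinuousOn h2 I := by
    apply ContinuousOn.if
    · intro a ha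
      have ha0 : a = 0 := by
        have := ha.2
        rw [show {a : ℝ | a ≤ 0} = Iic 0 from rfl, frontier_Iic] at this
        simpa using this
      simp [ha0]
    · exact Real.continuous_sin.neg.continuousOn
    · apply ContinuousOn.div
      · exact (Real.continuous_sin.const_smul (2:ℝ)).continuousOn.congr
          (fun y _ => by simp [smul_eq_mul])
      · exact (Real.continuous_cos.pow 3).continuousOn
      · exact fun y hy => pow_ne_zero 3 (hcos y hy.1).ne'
  -- C² statement
  constructor
  · rw [show (2 : WithTop ℕ∞) = 1 + 1 from rfl, contDiffOn_succ_iff_deriv_of_isOpen hIopen]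
    refine ⟨fun x hx => (key1 x hx).differentiableAt.differentiableWithinAt,
      by intro hω; exact absurd hω (by simp), ?_⟩
    rw [show (1 : WithTop ℕ∞) = 0 + 1 from rfl, contDiffOn_succ_iff_deriv_of_isOpen hIopen]
    refine ⟨?_, by intro hω; exact absurd hω (by simp), ?_⟩
    · intro x hx
      have heq : deriv h =ᶠ[nhds x] h1 := Filter.eventuallyEq_of_mem (hIopen.mem_nhds hx) eq1
      exact (heq.differentiableAt_iff.2 (key2 x hx).differentiableAt).differentiableWithinAt
    · rw [contDiffOn_zero]
      exact hcont2.congr eq2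
  -- pointwise statements
  · intro x hx
    have hc : Real.cos x ≠ 0 := (hcos x hx).ne'
    have dh : deriv h x = h1 x := eq1 hx
    have ddh : deriv (deriv h) x = h2 x := eq2 x hx
    have dsin : deriv Real.sin x = Real.cos x := Real.deriv_sin ▸ rfl
    have ddsin : deriv (deriv Real.sin) x = -Real.sin x := by
      rw [Real.deriv_sin, Real.deriv_cos]
    have dtan : deriv Real.tan x = 1 / Real.cos x ^ 2 := Real.deriv_tan x
    have ddtan : deriv (deriv Real.tan) x = 2 * Real.sin x / Real.cos x ^ 3 := by
      rw [show deriv Real.tan = fun y => 1 / Real.cos y ^ 2 from funext Real.deriv_tan]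
      exact (aux_inv_sq hc).deriv
    have e1 : -Real.sin x / Real.cos x = -Real.tan x := by
      rw [Real.tan_eq_sin_div_cos]; ring
    have e2 : (2 * Real.sin x / Real.cos x ^ 3) / (1 / Real.cos x ^ 2) = 2 * Real.tan x := by
      rw [Real.tan_eq_sin_div_cos]; field_simp
    by_cases hx0 : x ≤ 0
    · have hsin : Real.sin x ≤ 0 :=
        Real.sin_nonpos_of_nonpos_of_neg_pi_le hx0 (by linarith [hx.1, Real.pi_pos])
      have htan : Real.tan x ≤ 0 := by
        rw [Real.tan_eq_sin_div_cos]
        exact div_nonpos_of_nonpos_of_nonneg hsin (hcos x hx).le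
      have hmax : max (-Real.tan x) (2 * Real.tan x) = -Real.tan x :=
        max_eq_left (by linarith)
      refine ⟨by rw [dh]; simp [hh1, hx0, hc], ?_, ?_⟩
      · rw [dh, ddh, dsin, ddsin, dtan, ddtan, e1, e2]
        simp only [hh1, hh2, if_pos hx0]
        rw [e1, hmax]
      · rw [dh, ddh]
        simp only [hh1, hh2, if_pos hx0]
        rw [e1, hmax]
    · have hxpos : 0 < x := not_le.1 hx0
      have hsin : 0 ≤ Real.sin x := Real.sin_nonneg_of_nonneg_of_le_pi hxpos.le
        (by linarith [hx.2, Real.pi_pos])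
      have htan : 0 ≤ Real.tan x := by
        rw [Real.tan_eq_sin_div_cos]
        exact div_nonneg hsin (hcos x hx).le
      have hmax : max (-Real.tan x) (2 * Real.tan x) = 2 * Real.tan x :=
        max_eq_right (by linarith)
      refine ⟨by rw [dh]; simp [hh1, hx0, hc, pow_ne_zero], ?_, ?_⟩
      · rw [dh, ddh, dsin, ddsin, dtan, ddtan, e1, e2]
        simp only [hh1, hh2, if_neg hx0]
        rw [e2, hmax]
      · rw [dh, ddh]
        simp only [hh1, hh2, if_neg hx0]
        rw [e2, hmax]
end

section
/- Let f, g : (−1,1) → ℝ be given by f(x) = x and g(x) = x³. Then there is no continuous strictly monotone function s : (−1,1) → ℝ such that both A^[f] ≤ A^[s] and A^[g] ≤ A^[s] hold pointwise on all finite tuples from (−1,1). -/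
/-!
If `A^[x] ≤ A^[s]` for an increasing continuous `s`, then `s` of an arithmetic mean is at most the
mean of the values of `s` (the `s`-mean exists by the intermediate value theorem). Applied to the
pair `±x` and to one entry `-1/2` among `n - 1` zeros, this gives, with `d = s 0 - s (-1/2) > 0`,
`2 s 0 ≤ s (-1/(2n)) + s (1/(2n))` and `s (-1/(2n)) ≤ s 0 - d/n`. The cubic mean of one entry `1/2`
among `n³ - 1` zeros is `1/(2n)`, so `A^[x³] ≤ A^[s]` gives `s (1/(2n)) ≤ s 0 + c/n³` with
`c = s (1/2) - s 0`. Hence `d n² ≤ c` for every `n`, which is absurd. A decreasing `s` is replaced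
by `-s`, which defines the same means.
-/

open Filter Set

theorem Fintype.sum_comp_pi_single {ι : Type*} [Fintype ι] [DecidableEq ι] (i : ι) (g : ℝ → ℝ)
    (a : ℝ) : ∑ j, g ((Pi.single i a : ι → ℝ) j) = Fintype.card ι * g 0 + (g a - g 0) := by
  have hg : ∀ j, g ((Pi.single i a : ι → ℝ) j) = g 0 + (Pi.single i (g a - g 0) : ι → ℝ) j := by
    intro j
    rcases eq_or_ne j i with rfl | hj <;> simp [*]
  simp [hg, Finset.sum_add_distrib]

namespace QALE

variable {I : Set ℝ} {f s : ℝ → ℝ}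

theorem neg_right (h : QALE I f s) : QALE I f (-s) := by
  intro n hn v hv a b ha hb
  refine h n hn v hv a b ha ⟨hb.1, ?_⟩
  have hb' := hb.2
  simp only [Pi.neg_apply, Finset.sum_neg_distrib, neg_div] at hb'
  linarith

variable (h : QALE I f s) (hI : I.OrdConnected) (hs : ContinuousOn s I) (hmono : MonotoneOn s I)
include h hI hs hmono

theorem apply_le_average {n : ℕ} (hn : 0 < n) {v : Fin n → ℝ} (hv : ∀ i, v i ∈ I) {m : ℝ}
    (hm : IsQAM I f v m) : s m ≤ (∑ i, s (v i)) / n := by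
  set μ := (∑ i, s (v i)) / n
  have hne : (Finset.univ : Finset (Fin n)).Nonempty := ⟨⟨0, hn⟩, Finset.mem_univ _⟩
  have hsum : ∑ _i : Fin n, μ = ∑ i, s (v i) := by
    simp only [Finset.sum_const, Finset.card_univ, Fintype.card_fin, nsmul_eq_mul, μ]
    field_simp
  obtain ⟨j, -, hj⟩ := Finset.exists_le_of_sum_le hne hsum.ge
  obtain ⟨k, -, hk⟩ := Finset.exists_le_of_sum_le hne hsum.le
  obtain ⟨b, hb, hsb⟩ := intermediate_value_uIcc (hs.mono (hI.uIcc_subset (hv j) (hv k)))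
    (mem_uIcc_of_le hj hk)
  have hbI : b ∈ I := hI.uIcc_subset (hv j) (hv k) hb
  rw [← hsb]
  exact hmono hm.1 hbI (h n hn v hv m b hm ⟨hbI, hsb⟩)

theorem apply_le_midpoint {x y m : ℝ} (hx : x ∈ I) (hy : y ∈ I) (hm : m ∈ I)
    (hfm : f m = (f x + f y) / 2) : s m ≤ (s x + s y) / 2 := by
  have hv : ∀ i, ![x, y] i ∈ I := by
    intro i
    fin_cases i <;> assumption
  have := h.apply_le_average hI hs hmono two_pos hv ⟨hm, by simpa using hfm⟩
  simpa using this

theorem apply_le_of_pi_single (h0 : (0 : ℝ) ∈ I) {a m : ℝ} (ha : a ∈ I) (hm : m ∈ I) {N : ℕ}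
    (hN : 0 < N) (hfm : f m = f 0 + (f a - f 0) / N) : s m ≤ s 0 + (s a - s 0) / N := by
  have hv : ∀ j, (Pi.single ⟨0, hN⟩ a : Fin N → ℝ) j ∈ I := by
    intro j
    rcases eq_or_ne j ⟨0, hN⟩ with rfl | hj <;> simp [*]
  have hN' : (N : ℝ) ≠ 0 := by positivity
  have := h.apply_le_average hI hs hmono hN hv
    ⟨hm, by rw [Fintype.sum_comp_pi_single, hfm, Fintype.card_fin]; field_simp⟩
  rw [Fintype.sum_comp_pi_single, Fintype.card_fin] at this
  convert this using 1
  field_simp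

end QALE

theorem not_QALE_id_and_cube_of_strictMonoOn {s : ℝ → ℝ} (hs : ContinuousOn s (Ioo (-1) 1))
    (hmono : StrictMonoOn s (Ioo (-1) 1)) (hf : QALE (Ioo (-1) 1) (fun x => x) s)
    (hg : QALE (Ioo (-1 : ℝ) 1) (fun x => x ^ 3) s) : False := by
  have hI : (Ioo (-1 : ℝ) 1).OrdConnected := ordConnected_Ioo
  have h0 : (0 : ℝ) ∈ Ioo (-1) 1 := by norm_num
  have hhalf : (1 / 2 : ℝ) ∈ Ioo (-1) 1 := by norm_num
  have hnhalf : (-(1 / 2) : ℝ) ∈ Ioo (-1) 1 := by norm_num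
  set c := s (1 / 2) - s 0
  set d := s 0 - s (-(1 / 2))
  have hc : 0 < c := sub_pos.2 (hmono h0 hhalf (by norm_num))
  have hd : 0 < d := sub_pos.2 (hmono hnhalf h0 (by norm_num))
  have hbound : ∀ n : ℕ, 0 < n → d * n ^ 2 ≤ c := by
    intro n hn
    have hn' : (1 : ℝ) ≤ n := Nat.one_le_cast.2 hn
    have hx : 1 / (2 * n : ℝ) ∈ Ioo (-1) 1 := by
      constructor
      · have : (0 : ℝ) < 1 / (2 * n) := by positivity
        linarith
      · rw [div_lt_one (by positivity)]
        linarith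
    have hnx : -(1 / (2 * n : ℝ)) ∈ Ioo (-1) 1 := ⟨by linarith [hx.2], by linarith [hx.1]⟩
    have hneg := hf.apply_le_of_pi_single hI hs hmono.monotoneOn h0 hnhalf hnx hn
      (by field_simp; ring)
    have hpos := hg.apply_le_of_pi_single hI hs hmono.monotoneOn h0 hhalf hx (pow_pos hn 3)
      (by push_cast; field_simp; ring)
    have hmid := hf.apply_le_midpoint hI hs hmono.monotoneOn hnx hx h0 (by ring)
    have hdc : d / n ≤ c / n ^ 3 := by
      push_cast at hpos
      linear_combination hneg + hpos + 2 * hmid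
    rw [div_le_div_iff₀ (by positivity) (by positivity)] at hdc
    nlinarith
  obtain ⟨n, hn⟩ := exists_nat_gt (c / d)
  have hn0 : (0 : ℝ) < n := (div_pos hc hd).trans hn
  have hdn : c < d * n := by rwa [div_lt_iff₀ hd, mul_comm] at hn
  have hn1 : (n : ℝ) ≤ n ^ 2 := by nlinarith [(Nat.one_le_cast (α := ℝ)).2 (Nat.cast_pos.1 hn0)]
  nlinarith [hbound n (Nat.cast_pos.1 hn0)]

/-- for `f x = x` and `g x = x^3` on `(−1,1)`, no continuous strictly
monotone `s` satisfies both `A^[f] ≤ A^[s]` and `A^[g] ≤ A^[s]`. -/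
theorem no_common_upper_bound :
    ¬ ∃ s : ℝ → ℝ,
        ContinuousOn s (Set.Ioo (-1 : ℝ) 1) ∧
        (StrictMonoOn s (Set.Ioo (-1 : ℝ) 1) ∨ StrictAntiOn s (Set.Ioo (-1 : ℝ) 1)) ∧
        QALE (Set.Ioo (-1 : ℝ) 1) (fun x => x) s ∧
        QALE (Set.Ioo (-1 : ℝ) 1) (fun x => x ^ 3) s := by
  rintro ⟨s, hs, hmono | hanti, hf, hg⟩
  · exact not_QALE_id_and_cube_of_strictMonoOn hs hmono hf hg
  · exact not_QALE_id_and_cube_of_strictMonoOn hs.neg hanti.neg hf.neg_right hg.neg_right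
end
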